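/- arXiv:1802.09774 — 3 statements merged into one kernel-verified Lean document; each statement's English description precedes it below -/
import Mathlib

section
/- Let P be a PARS over A, let ε > 0, and let f : A → ℝ≥0 be a ranking function for P with parameter ε. If μ ⇒_P ρ for multidistributions μ, ρ, then E(f(μ)) ≥ E(f(ρ)) + ε·|ρ|. -/
/-! Both sides of the inequality are additive and homogeneous in the multidistribution, so it
survives the scaled unions of rule (iii). A rule step `{1:a} ⇒ d` is exactly the ranking
condition, since `|d| = 1`, and a terminal step is trivial. -/

open scoped NNReal ENNReal

/-- A finite (probability) distribution on `A`: a finitely supported weight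
function with total weight `1`. -/
structure FinDist (A : Type*) where
  w : A →₀ ℝ≥0
  sum_one : w.sum (fun _ p => p) = 1

/-- Multidistributions on `A`: finite multisets of weighted elements `p:a`. -/
abbrev MD (A : Type*) := Multiset (ℝ≥0 × A)

namespace MD

/-- The total weight `|μ|` of a multidistribution. -/
def wt {A : Type*} (μ : MD A) : ℝ≥0 := (μ.map Prod.fst).sum

/-- Scalar multiplication `p·μ`. -/
def smul {A : Type*} (p : ℝ≥0) (μ : MD A) : MD A :=
  μ.map fun qa => (p * qa.1, qa.2)

/-- The expected value `E(f(μ)) = Σ_{p:a ∈ μ} p·f(a)`. -/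
def exp {A : Type*} (f : A → ℝ≥0) (μ : MD A) : ℝ≥0 :=
  (μ.map fun pa => pa.1 * f pa.2).sum

end MD

namespace FinDist

/-- The multidistribution associated with a finite distribution. -/
def toMD {A : Type*} (d : FinDist A) : MD A :=
  d.w.support.val.map fun a => (d.w a, a)

/-- The expected value `E(f(d)) = Σ_a d(a)·f(a)`. -/
def exp {A : Type*} (f : A → ℝ≥0) (d : FinDist A) : ℝ≥0 :=
  d.w.sum fun a p => p * f a

/-- Pushforward of a finite distribution along a map; this is
`overline(h(d))`, the collapse of the elementwise image of `d`. -/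
noncomputable def map {A B : Type*} (h : A → B) (d : FinDist A) : FinDist B :=
  ⟨Finsupp.mapDomain h d.w, by
    rw [Finsupp.sum_mapDomain_index (fun _ => rfl) (fun _ _ _ => rfl)]
    exact d.sum_one⟩

/-- The Dirac distribution. -/
noncomputable def dirac {A : Type*} (a : A) : FinDist A :=
  ⟨Finsupp.single a 1, by simp⟩

end FinDist

/-- A PARS over `A`: a set of probabilistic reductions `a → d`. -/
abbrev PARS (A : Type*) := A → FinDist A → Prop

/-- `a` is terminal (a normal form) if it has no reduction. -/
def PARS.Terminal {A : Type*} (P : PARS A) (a : A) : Prop := ∀ d, ¬ P a d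

/-- The probabilistic reduction relation `⇒_P` on multidistributions. -/
inductive PARS.Step {A : Type*} (P : PARS A) : MD A → MD A → Prop
  | term (a : A) : P.Terminal a → PARS.Step P {(1, a)} 0
  | rule (a : A) (d : FinDist A) : P a d → PARS.Step P {(1, a)} d.toMD
  | conv (n : ℕ) (p : Fin n → ℝ≥0) (μ ρ : Fin n → MD A) :
      (∑ i, p i) ≤ 1 → (∀ i, PARS.Step P (μ i) (ρ i)) →
      PARS.Step P (∑ i, MD.smul (p i) (μ i)) (∑ i, MD.smul (p i) (ρ i))

/-- An (infinite) reduction sequence of `P`. -/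
def PARS.RedSeq {A : Type*} (P : PARS A) (μs : ℕ → MD A) : Prop :=
  ∀ n, P.Step (μs n) (μs (n + 1))

/-- A reduction sequence of `P` starting from `μ`. -/
def PARS.RedSeqFrom {A : Type*} (P : PARS A) (μ : MD A) (μs : ℕ → MD A) : Prop :=
  μs 0 = μ ∧ P.RedSeq μs

/-- The expected derivation length `adl(⃗μ) = Σ_{n ≥ 1} |μ_n|`. -/
noncomputable def adl {A : Type*} (μs : ℕ → MD A) : ℝ≥0∞ :=
  ∑' n : ℕ, (MD.wt (μs (n + 1)) : ℝ≥0∞)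

/-- The expected derivation height `adh_P(a)`. -/
noncomputable def adh {A : Type*} (P : PARS A) (a : A) : ℝ≥0∞ :=
  ⨆ (μs : ℕ → MD A) (_ : P.RedSeqFrom {(1, a)} μs), adl μs

/-- Strong almost sure termination. -/
def PARS.SAST {A : Type*} (P : PARS A) : Prop := ∀ a, adh P a < ⊤

/-- Almost sure termination. -/
def PARS.AST {A : Type*} (P : PARS A) : Prop :=
  ∀ μs : ℕ → MD A, P.RedSeq μs →
    Filter.Tendsto (fun n => MD.wt (μs n)) Filter.atTop (nhds 0)

/-- `f` is a (probabilistic) ranking function for `P` with parameter `ε`. -/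
def PARS.Ranking {A : Type*} (P : PARS A) (ε : ℝ≥0) (f : A → ℝ≥0) : Prop :=
  ∀ a d, P a d → f a ≥ ε + FinDist.exp f d

namespace MD

variable {A : Type*}

def expHom (f : A → ℝ≥0) : MD A →+ ℝ≥0 where
  toFun := exp f
  map_zero' := rfl
  map_add' μ ν := by simp [exp]

def wtHom : MD A →+ ℝ≥0 where
  toFun := wt
  map_zero' := rfl
  map_add' μ ν := by simp [wt]

lemma exp_sum {ι : Type*} (f : A → ℝ≥0) (s : Finset ι) (μ : ι → MD A) :
    exp f (∑ i ∈ s, μ i) = ∑ i ∈ s, exp f (μ i) :=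
  map_sum (expHom f) μ s

lemma wt_sum {ι : Type*} (s : Finset ι) (μ : ι → MD A) :
    wt (∑ i ∈ s, μ i) = ∑ i ∈ s, wt (μ i) :=
  map_sum wtHom μ s

lemma exp_smul (f : A → ℝ≥0) (p : ℝ≥0) (μ : MD A) : exp f (smul p μ) = p * exp f μ := by
  simp [exp, smul, Multiset.map_map, mul_assoc, Multiset.sum_map_mul_left]

lemma wt_smul (p : ℝ≥0) (μ : MD A) : wt (smul p μ) = p * wt μ := by
  simp [wt, smul, Multiset.map_map, Multiset.sum_map_mul_left]

lemma exp_add_mul_wt_sum_smul {ι : Type*} (f : A → ℝ≥0) (ε : ℝ≥0) (s : Finset ι)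
    (p : ι → ℝ≥0) (μ : ι → MD A) :
    exp f (∑ i ∈ s, smul (p i) (μ i)) + ε * wt (∑ i ∈ s, smul (p i) (μ i)) =
      ∑ i ∈ s, p i * (exp f (μ i) + ε * wt (μ i)) := by
  simp only [exp_sum, wt_sum, exp_smul, wt_smul, Finset.mul_sum, ← Finset.sum_add_distrib]
  exact Finset.sum_congr rfl fun i _ => by ring

end MD

namespace FinDist

variable {A : Type*}

lemma exp_toMD (f : A → ℝ≥0) (d : FinDist A) : MD.exp f d.toMD = d.exp f := by
  rw [MD.exp, toMD, Multiset.map_map]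
  rfl

lemma wt_toMD (d : FinDist A) : MD.wt d.toMD = 1 := by
  rw [MD.wt, toMD, Multiset.map_map]
  exact d.sum_one

end FinDist

theorem stmt_1_general {A : Type*} (P : PARS A) (ε : ℝ≥0)
    (f : A → ℝ≥0) (hf : P.Ranking ε f)
    (μ ρ : MD A) (h : P.Step μ ρ) :
    MD.exp f μ ≥ MD.exp f ρ + ε * MD.wt ρ := by
  induction h with
  | term a _ => simp [MD.exp, MD.wt]
  | rule a d hd =>
    rw [FinDist.exp_toMD, FinDist.wt_toMD, mul_one, add_comm]
    simpa [MD.exp] using hf a d hd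
  | conv n p μ ρ _ _ ih =>
    rw [MD.exp_add_mul_wt_sum_smul, MD.exp_sum]
    simp only [MD.exp_smul]
    gcongr with i
    exact ih i

/-- a ranking function decreases in expectation by at least
`ε·|ρ|` along each probabilistic reduction step. -/
theorem stmt_1 {A : Type*} [Countable A] (P : PARS A) (ε : ℝ≥0) (hε : 0 < ε)
    (f : A → ℝ≥0) (hf : P.Ranking ε f)
    (μ ρ : MD A) (h : P.Step μ ρ) :
    MD.exp f μ ≥ MD.exp f ρ + ε * MD.wt ρ :=
  stmt_1_general P ε f hf μ ρ h
end

section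
/- Let P be a PARS over A, let ε > 0, let f : A → ℝ≥0 be a ranking function for P with parameter ε, and let (μ_n)_{n∈ℕ} be a reduction sequence of P. Then for all m ≤ n, E(f(μ_m)) ≥ ε · Σ_{i=m+1}^{n} |μ_i|. -/
open scoped NNReal ENNReal

lemma MD.exp_sum_s2 {A : Type*} (f : A → ℝ≥0) {n : ℕ} (μ : Fin n → MD A) :
    MD.exp f (∑ i, μ i) = ∑ i, MD.exp f (μ i) := by
  unfold MD.exp
  rw [← Multiset.coe_mapAddMonoidHom, map_sum]
  exact map_sum Multiset.sumAddMonoidHom _ _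

lemma MD.wt_sum_s2 {A : Type*} {n : ℕ} (μ : Fin n → MD A) :
    MD.wt (∑ i, μ i) = ∑ i, MD.wt (μ i) := by
  unfold MD.wt
  rw [← Multiset.coe_mapAddMonoidHom, map_sum]
  exact map_sum Multiset.sumAddMonoidHom _ _

lemma MD.exp_smul_s2 {A : Type*} (f : A → ℝ≥0) (p : ℝ≥0) (μ : MD A) :
    MD.exp f (MD.smul p μ) = p * MD.exp f μ := by
  simp [MD.exp, MD.smul, Multiset.map_map, Function.comp, mul_assoc,
    ← Multiset.sum_map_mul_left]

lemma MD.wt_smul_s2 {A : Type*} (p : ℝ≥0) (μ : MD A) :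
    MD.wt (MD.smul p μ) = p * MD.wt μ := by
  simp [MD.wt, MD.smul, Multiset.map_map, Function.comp,
    ← Multiset.sum_map_mul_left]

lemma MD.exp_toMD {A : Type*} (f : A → ℝ≥0) (d : FinDist A) :
    MD.exp f d.toMD = FinDist.exp f d := by
  unfold MD.exp FinDist.toMD FinDist.exp Finsupp.sum
  rw [Multiset.map_map]
  rfl

lemma MD.wt_toMD {A : Type*} (d : FinDist A) : MD.wt d.toMD = 1 := by
  have h := d.sum_one
  unfold MD.wt FinDist.toMD
  rw [Multiset.map_map]
  exact h

lemma step_key {A : Type*} {P : PARS A} {ε : ℝ≥0} {f : A → ℝ≥0}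
    (hf : P.Ranking ε f) {μ ρ : MD A} (h : P.Step μ ρ) :
    MD.exp f μ ≥ ε * MD.wt ρ + MD.exp f ρ := by
  induction h with
  | term a ha => simp [MD.exp, MD.wt]
  | rule a d hd =>
      have h := hf a d hd
      have h1 : MD.exp f {(1, a)} = f a := by simp [MD.exp]
      rw [h1, MD.wt_toMD, MD.exp_toMD, mul_one]
      exact h
  | conv n p μ ρ hp hstep ih =>
      rw [MD.exp_sum_s2, MD.exp_sum_s2, MD.wt_sum_s2, Finset.mul_sum, ← Finset.sum_add_distrib]
      refine Finset.sum_le_sum fun i _ => ?_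
      rw [MD.exp_smul_s2, MD.exp_smul_s2, MD.wt_smul_s2]
      calc ε * (p i * MD.wt (ρ i)) + p i * MD.exp f (ρ i)
          = p i * (ε * MD.wt (ρ i) + MD.exp f (ρ i)) := by ring
        _ ≤ p i * MD.exp f (μ i) := mul_le_mul_right (ih i) _

/-- along a reduction sequence, `E(f(μ_m)) ≥ ε · Σ_{i=m+1}^n |μ_i|`. -/
theorem stmt_2 {A : Type*} [Countable A] (P : PARS A) (ε : ℝ≥0) (hε : 0 < ε)
    (f : A → ℝ≥0) (hf : P.Ranking ε f)
    (μs : ℕ → MD A) (hseq : P.RedSeq μs) :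
    ∀ m n : ℕ, m ≤ n →
      MD.exp f (μs m) ≥ ε * ∑ i ∈ Finset.Icc (m + 1) n, MD.wt (μs i) := by
  have key : ∀ m n : ℕ, m ≤ n →
      MD.exp f (μs m) ≥ ε * ∑ i ∈ Finset.Icc (m + 1) n, MD.wt (μs i) + MD.exp f (μs n) := by
    intro m n hmn
    induction n, hmn using Nat.le_induction with
    | base => simp
    | succ n hmn ih =>
        rw [Finset.sum_Icc_succ_top (by omega), mul_add]
        calc ε * ∑ i ∈ Finset.Icc (m + 1) n, MD.wt (μs i)
              + ε * MD.wt (μs (n + 1)) + MD.exp f (μs (n + 1))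
            = ε * ∑ i ∈ Finset.Icc (m + 1) n, MD.wt (μs i)
              + (ε * MD.wt (μs (n + 1)) + MD.exp f (μs (n + 1))) := by ring
          _ ≤ ε * ∑ i ∈ Finset.Icc (m + 1) n, MD.wt (μs i) + MD.exp f (μs n) :=
              add_le_add_right (step_key hf (hseq n)) _
          _ ≤ MD.exp f (μs m) := ih
  intro m n hmn
  exact le_trans (le_add_right le_rfl) (key m n hmn)
end

section
/- Let P be the PARS over ℕ ⊎ {ω} whose probabilistic reductions are exactly ω → ⟨1:n⟩ for every n ∈ ℕ and n+1 → ⟨1:n⟩ for every n ∈ ℕ. Then P is positively almost surely terminating (every reduction sequence from any {1:a} has finite expected derivation length), but adh_P(ω) = ∞, so P is not strongly almost surely terminating. -/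
open scoped NNReal ENNReal

section Aux10

/-- Generic multiset expectation with `ℝ≥0∞` values. -/
noncomputable def mexp10 (g : Option ℕ → ℝ≥0∞) (μ : MD (Option ℕ)) : ℝ≥0∞ :=
  (μ.map fun pa => (pa.1 : ℝ≥0∞) * g pa.2).sum

lemma mexp10_zero (g : Option ℕ → ℝ≥0∞) : mexp10 g 0 = 0 := rfl

lemma mexp10_singleton (g : Option ℕ → ℝ≥0∞) (x : ℝ≥0 × Option ℕ) :
    mexp10 g {x} = (x.1 : ℝ≥0∞) * g x.2 := by simp [mexp10]

lemma mexp10_add (g : Option ℕ → ℝ≥0∞) (μ ν : MD (Option ℕ)) :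
    mexp10 g (μ + ν) = mexp10 g μ + mexp10 g ν := by simp [mexp10]

lemma mexp10_smul (g : Option ℕ → ℝ≥0∞) (p : ℝ≥0) (μ : MD (Option ℕ)) :
    mexp10 g (MD.smul p μ) = (p : ℝ≥0∞) * mexp10 g μ := by
  unfold mexp10 MD.smul
  rw [Multiset.map_map, ← Multiset.sum_map_mul_left]
  congr 1
  apply Multiset.map_congr rfl
  intro x _
  simp only [Function.comp_apply]
  push_cast
  ring

lemma mexp10_finsum (g : Option ℕ → ℝ≥0∞) {ι : Type*} (s : Finset ι)
    (ν : ι → MD (Option ℕ)) :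
    mexp10 g (∑ i ∈ s, ν i) = ∑ i ∈ s, mexp10 g (ν i) := by
  classical
  induction s using Finset.induction_on with
  | empty => simp [mexp10]
  | insert _ _ h ih => rw [Finset.sum_insert h, Finset.sum_insert h, mexp10_add, ih]

/-- The ranking function: `rk ω = ∞`, `rk n = n + 1`. -/
noncomputable def rk10 : Option ℕ → ℝ≥0∞
  | none => ⊤
  | some n => (n : ℝ≥0∞) + 1

lemma wtE_eq (μ : MD (Option ℕ)) : (MD.wt μ : ℝ≥0∞) = mexp10 (fun _ => 1) μ := by
  induction μ using Multiset.induction_on with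
  | empty => simp [MD.wt, mexp10]
  | cons x μ ih =>
    simp only [MD.wt, mexp10, Multiset.map_cons, Multiset.sum_cons, ENNReal.coe_add,
      mul_one] at *
    rw [ih]

lemma toMD_indicator (d : FinDist (Option ℕ)) (n : ℕ)
    (h : ∀ y, d.w y = if y = some n then 1 else 0) :
    d.toMD = {((1 : ℝ≥0), some n)} := by
  have hw : d.w = Finsupp.single (some n) 1 := by
    ext y
    rw [h y, Finsupp.single_apply]
    simp [eq_comm]
  unfold FinDist.toMD
  rw [hw, Finsupp.support_single_ne_zero _ one_ne_zero]
  simp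

lemma step_some (P : PARS (Option ℕ))
    (hP : ∀ (a : Option ℕ) (d : FinDist (Option ℕ)), P a d ↔
      (a = none ∧ ∃ n : ℕ, ∀ y, d.w y = if y = some n then 1 else 0) ∨
      (∃ n : ℕ, a = some (n + 1) ∧ ∀ y, d.w y = if y = some n then 1 else 0))
    {μ ρ : MD (Option ℕ)} (h : P.Step μ ρ) :
    ∀ x ∈ ρ, x.1 = 0 ∨ ∃ n : ℕ, x.2 = some n := by
  induction h with
  | term a ha => simp
  | rule a d hd =>
    rcases (hP a d).1 hd with ⟨-, n, hw⟩ | ⟨n, -, hw⟩ <;>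
    · rw [toMD_indicator d n hw]
      intro x hx
      rw [Multiset.mem_singleton] at hx
      subst hx
      exact Or.inr ⟨n, rfl⟩
  | conv n p μ ρ hle hs ih =>
    intro x hx
    rw [Multiset.mem_sum] at hx
    obtain ⟨i, -, hxi⟩ := hx
    obtain ⟨qa, hqa, hx⟩ := Multiset.mem_map.1 hxi
    rcases ih i qa hqa with h0 | ⟨m, hm⟩
    · left; rw [← hx]; simp [h0]
    · right; exact ⟨m, by rw [← hx]; exact hm⟩

lemma mexp10_rk_ne_top {μ : MD (Option ℕ)}
    (h : ∀ x ∈ μ, x.1 = 0 ∨ ∃ n : ℕ, x.2 = some n) : mexp10 rk10 μ ≠ ⊤ := by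
  induction μ using Multiset.induction_on with
  | empty => simp [mexp10]
  | cons x μ ih =>
    rw [← Multiset.singleton_add, mexp10_add, mexp10_singleton]
    refine ENNReal.add_ne_top.2 ⟨?_, ih fun y hy => h y (Multiset.mem_cons_of_mem hy)⟩
    rcases h x (Multiset.mem_cons_self x μ) with h0 | ⟨n, hn⟩
    · simp [h0]
    · rw [hn]
      exact ENNReal.mul_ne_top ENNReal.coe_ne_top
        (by simp [rk10, ENNReal.add_ne_top])

lemma step_decreasing (P : PARS (Option ℕ))
    (hP : ∀ (a : Option ℕ) (d : FinDist (Option ℕ)), P a d ↔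
      (a = none ∧ ∃ n : ℕ, ∀ y, d.w y = if y = some n then 1 else 0) ∨
      (∃ n : ℕ, a = some (n + 1) ∧ ∀ y, d.w y = if y = some n then 1 else 0))
    {μ ρ : MD (Option ℕ)} (h : P.Step μ ρ) :
    mexp10 rk10 ρ + mexp10 (fun _ => 1) ρ ≤ mexp10 rk10 μ := by
  induction h with
  | term a ha => simp [mexp10]
  | rule a d hd =>
    rcases (hP a d).1 hd with ⟨ha, n, hw⟩ | ⟨n, ha, hw⟩ <;> subst ha <;>
      rw [toMD_indicator d n hw, mexp10_singleton, mexp10_singleton, mexp10_singleton]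
    · simp [rk10]
    · apply le_of_eq
      simp only [rk10]
      push_cast
      ring
  | conv n p μ ρ hle hs ih =>
    rw [mexp10_finsum, mexp10_finsum, mexp10_finsum, ← Finset.sum_add_distrib]
    apply Finset.sum_le_sum
    intro i _
    rw [mexp10_smul, mexp10_smul, mexp10_smul, ← mul_add]
    exact mul_le_mul_right (ih i) _

lemma telescope10 (P : PARS (Option ℕ))
    (hP : ∀ (a : Option ℕ) (d : FinDist (Option ℕ)), P a d ↔
      (a = none ∧ ∃ n : ℕ, ∀ y, d.w y = if y = some n then 1 else 0) ∨
      (∃ n : ℕ, a = some (n + 1) ∧ ∀ y, d.w y = if y = some n then 1 else 0))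
    {μs : ℕ → MD (Option ℕ)} (h : P.RedSeq μs) (N : ℕ) :
    mexp10 rk10 (μs N) + ∑ k ∈ Finset.range N, (MD.wt (μs (k + 1)) : ℝ≥0∞)
      ≤ mexp10 rk10 (μs 0) := by
  induction N with
  | zero => simp
  | succ M ih =>
    have hstep := step_decreasing P hP (h M)
    rw [← wtE_eq] at hstep
    rw [Finset.sum_range_succ]
    calc mexp10 rk10 (μs (M + 1)) +
          (∑ k ∈ Finset.range M, (MD.wt (μs (k + 1)) : ℝ≥0∞) + (MD.wt (μs (M + 1)) : ℝ≥0∞))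
        = (mexp10 rk10 (μs (M + 1)) + (MD.wt (μs (M + 1)) : ℝ≥0∞)) +
            ∑ k ∈ Finset.range M, (MD.wt (μs (k + 1)) : ℝ≥0∞) := by ring
      _ ≤ mexp10 rk10 (μs M) + ∑ k ∈ Finset.range M, (MD.wt (μs (k + 1)) : ℝ≥0∞) :=
          add_le_add_left hstep _
      _ ≤ _ := ih

lemma past10 (P : PARS (Option ℕ))
    (hP : ∀ (a : Option ℕ) (d : FinDist (Option ℕ)), P a d ↔
      (a = none ∧ ∃ n : ℕ, ∀ y, d.w y = if y = some n then 1 else 0) ∨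
      (∃ n : ℕ, a = some (n + 1) ∧ ∀ y, d.w y = if y = some n then 1 else 0))
    (a : Option ℕ) {μs : ℕ → MD (Option ℕ)}
    (h : P.RedSeqFrom {(1, a)} μs) : adl μs < ⊤ := by
  obtain ⟨h0, hseq⟩ := h
  have hfin : mexp10 rk10 (μs 1) ≠ ⊤ := mexp10_rk_ne_top (step_some P hP (hseq 0))
  have hνseq : P.RedSeq (fun k => μs (k + 1)) := fun k => hseq (k + 1)
  have hbound : ∀ N, ∑ k ∈ Finset.range N, (MD.wt (μs (k + 1)) : ℝ≥0∞)
      ≤ (MD.wt (μs 1) : ℝ≥0∞) + mexp10 rk10 (μs 1) := by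
    intro N
    cases N with
    | zero => simp
    | succ M =>
      rw [Finset.sum_range_succ']
      rw [add_comm]
      apply add_le_add_right
      have ht := telescope10 P hP hνseq M
      exact le_trans (le_add_self) ht
  rw [adl, ENNReal.tsum_eq_iSup_nat]
  refine lt_of_le_of_lt (iSup_le hbound) ?_
  exact ENNReal.add_lt_top.2 ⟨ENNReal.coe_lt_top, lt_top_iff_ne_top.2 hfin⟩

end Aux10

section Aux10b

lemma step_zero10 (P : PARS (Option ℕ)) : P.Step 0 0 := by
  have h := PARS.Step.conv (P := P) 0 Fin.elim0 Fin.elim0 Fin.elim0 (by simp)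
    (fun i => i.elim0)
  simpa using h

lemma dirac_w10 (n : ℕ) :
    ∀ y, (FinDist.dirac (some n)).w y = if y = some n then 1 else 0 := by
  intro y
  simp [FinDist.dirac, Finsupp.single_apply, eq_comm]

/-- The witnessing reduction sequence of length `N + 1` from `ω`. -/
def seq10 (N : ℕ) : ℕ → MD (Option ℕ) := fun k =>
  if k = 0 then {(1, none)} else if k ≤ N + 1 then {(1, some (N + 1 - k))} else 0

lemma seq10_step (P : PARS (Option ℕ))
    (hP : ∀ (a : Option ℕ) (d : FinDist (Option ℕ)), P a d ↔
      (a = none ∧ ∃ n : ℕ, ∀ y, d.w y = if y = some n then 1 else 0) ∨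
      (∃ n : ℕ, a = some (n + 1) ∧ ∀ y, d.w y = if y = some n then 1 else 0))
    (N k : ℕ) : P.Step (seq10 N k) (seq10 N (k + 1)) := by
  rcases Nat.eq_zero_or_pos k with rfl | hk
  · have e0 : seq10 N 0 = {(1, none)} := rfl
    have e1 : seq10 N 1 = {(1, some N)} := by
      unfold seq10
      rw [if_neg one_ne_zero, if_pos (by omega)]
      norm_num
    rw [e0, e1]
    have hp : P none (FinDist.dirac (some N)) := by
      rw [hP]
      exact Or.inl ⟨rfl, N, dirac_w10 N⟩
    have h := PARS.Step.rule (P := P) none (FinDist.dirac (some N)) hp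
    rwa [toMD_indicator _ N (dirac_w10 N)] at h
  · by_cases hk1 : k + 1 ≤ N + 1
    · -- 1 ≤ k ≤ N
      have e0 : seq10 N k = {(1, some ((N - k) + 1))} := by
        unfold seq10
        rw [if_neg (by omega), if_pos (by omega), show N + 1 - k = (N - k) + 1 by omega]
      have e1 : seq10 N (k + 1) = {(1, some (N - k))} := by
        unfold seq10
        rw [if_neg (by omega), if_pos hk1, show N + 1 - (k + 1) = N - k by omega]
      rw [e0, e1]
      have hp : P (some ((N - k) + 1)) (FinDist.dirac (some (N - k))) := by
        rw [hP]
        exact Or.inr ⟨N - k, rfl, dirac_w10 (N - k)⟩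
      have h := PARS.Step.rule (P := P) _ _ hp
      rwa [toMD_indicator _ (N - k) (dirac_w10 (N - k))] at h
    · by_cases hk2 : k ≤ N + 1
      · -- k = N + 1
        have hkN : k = N + 1 := by omega
        have e0 : seq10 N k = {(1, some 0)} := by
          unfold seq10
          rw [if_neg (by omega), if_pos hk2, show N + 1 - k = 0 by omega]
        have e1 : seq10 N (k + 1) = 0 := by
          unfold seq10
          rw [if_neg (by omega), if_neg (by omega)]
        rw [e0, e1]
        refine PARS.Step.term (some 0) ?_
        intro d hd
        rcases (hP _ _).1 hd with ⟨h, -⟩ | ⟨n, h, -⟩ <;> simp at h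
      · have e0 : seq10 N k = 0 := by
          unfold seq10
          rw [if_neg (by omega), if_neg (by omega)]
        have e1 : seq10 N (k + 1) = 0 := by
          unfold seq10
          rw [if_neg (by omega), if_neg (by omega)]
        rw [e0, e1]
        exact step_zero10 P

lemma adl_seq10 (N : ℕ) : adl (seq10 N) = (N : ℝ≥0∞) + 1 := by
  rw [adl]
  rw [tsum_eq_sum (s := Finset.range (N + 1))
    (by
      intro n hn
      rw [Finset.mem_range, not_lt] at hn
      have : seq10 N (n + 1) = 0 := by
        unfold seq10
        rw [if_neg (by omega), if_neg (by omega)]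
      simp [this, MD.wt])]
  have hterm : ∀ n ∈ Finset.range (N + 1), ((seq10 N (n + 1)).wt : ℝ≥0∞) = 1 := by
    intro n hn
    rw [Finset.mem_range] at hn
    have h1 : seq10 N (n + 1) = {(1, some (N - n))} := by
      unfold seq10
      rw [if_neg (by omega), if_pos (by omega), show N + 1 - (n + 1) = N - n by omega]
    simp [h1, MD.wt]
  rw [Finset.sum_congr rfl hterm, Finset.sum_const, Finset.card_range, nsmul_eq_mul,
    mul_one]
  push_cast
  ring

lemma adh_top10 (P : PARS (Option ℕ))
    (hP : ∀ (a : Option ℕ) (d : FinDist (Option ℕ)), P a d ↔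
      (a = none ∧ ∃ n : ℕ, ∀ y, d.w y = if y = some n then 1 else 0) ∨
      (∃ n : ℕ, a = some (n + 1) ∧ ∀ y, d.w y = if y = some n then 1 else 0)) :
    adh P none = ⊤ := by
  apply ENNReal.eq_top_of_forall_nnreal_le
  intro r
  have hfrom : P.RedSeqFrom {(1, none)} (seq10 ⌈r⌉₊) :=
    ⟨rfl, fun k => seq10_step P hP ⌈r⌉₊ k⟩
  calc (r : ℝ≥0∞) ≤ ((⌈r⌉₊ : ℕ) : ℝ≥0∞) := by
        rw [← ENNReal.coe_natCast]
        exact ENNReal.coe_le_coe.2 (Nat.le_ceil r)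
    _ ≤ ((⌈r⌉₊ : ℕ) : ℝ≥0∞) + 1 := le_self_add
    _ = adl (seq10 ⌈r⌉₊) := (adl_seq10 _).symm
    _ ≤ adh P none := le_iSup₂_of_le (seq10 ⌈r⌉₊) hfrom le_rfl

end Aux10b

/-- the PARS over `ℕ ⊎ {ω}` (with `none = ω`, `some k = k`)
with rules `ω → ⟨1:n⟩` and `n+1 → ⟨1:n⟩` is PAST but `adh(ω) = ∞`, hence
not SAST. -/
theorem stmt_10 (P : PARS (Option ℕ))
    (hP : ∀ (a : Option ℕ) (d : FinDist (Option ℕ)), P a d ↔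
      (a = none ∧ ∃ n : ℕ, ∀ y, d.w y = if y = some n then 1 else 0) ∨
      (∃ n : ℕ, a = some (n + 1) ∧ ∀ y, d.w y = if y = some n then 1 else 0)) :
    (∀ (a : Option ℕ) (μs : ℕ → MD (Option ℕ)),
        P.RedSeqFrom {(1, a)} μs → adl μs < ⊤) ∧
    adh P none = ⊤ ∧ ¬ P.SAST := by
  refine ⟨fun a μs h => past10 P hP a h, adh_top10 P hP, fun hS => ?_⟩
  have := hS none
  rw [adh_top10 P hP] at this
  exact lt_irrefl ⊤ this
end
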